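/- arXiv:2505.17817 — 4 statements merged into one kernel-verified Lean document; each statement's English description precedes it below -/
import Mathlib

section
/- Let F : ℝ → ℝ be C¹ with F'(t) > -π²/4 for all t, and let ψ₀ : [-1,1] → ℝ be a C² nonconstant solution of ψ₀'' = F(ψ₀) with ψ₀(-1) = ψ₀(1) = 0. Then ψ₀'(1) ≠ 0. -/
/-!
Suppose `ψ'(1) = 0`. Differentiating the equation, `w = ψ'` solves `w'' = F'(ψ) w` with
`F'(ψ) > -π²/4`, so by Sturm comparison with `sin (π (x - a) / (b - a))` it cannot have two
consecutive zeros `a < b` in `[-1, 1]` (there `b - a ≤ 2`). Since `ψ'(1) = 0` and Rolle's theorem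
places a zero of `ψ'` between `-1` and any other zero of `ψ`, this forces `ψ' ≡ 0`, so `ψ` is
constant.
-/

open Real Set Filter

lemma IsPreconnected.forall_pos_or_forall_neg {f : ℝ → ℝ} {s : Set ℝ} (hs : IsPreconnected s)
    (hf : ContinuousOn f s) (hf0 : ∀ x ∈ s, f x ≠ 0) :
    (∀ x ∈ s, 0 < f x) ∨ ∀ x ∈ s, f x < 0 := by
  by_contra! h
  obtain ⟨⟨x, hx, hfx⟩, y, hy, hfy⟩ := h
  obtain ⟨z, hz, hfz⟩ := (hs.image f hf).Icc_subset (mem_image_of_mem f hx)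
    (mem_image_of_mem f hy) ⟨hfx, hfy⟩
  exact hf0 z hz hfz

lemma exists_nodal_interval {f : ℝ → ℝ} {c d x : ℝ} (hf : ContinuousOn f (Icc c d))
    (hc : f c = 0) (hd : f d = 0) (hx : x ∈ Icc c d) (hfx : f x ≠ 0) :
    ∃ A B, c ≤ A ∧ A < B ∧ B ≤ d ∧ f A = 0 ∧ f B = 0 ∧ ∀ t ∈ Ioo A B, f t ≠ 0 := by
  set S₁ := Icc c x ∩ f ⁻¹' {0}
  set S₂ := Icc x d ∩ f ⁻¹' {0}
  have hS₁ : IsClosed S₁ :=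
    (hf.mono (Icc_subset_Icc_right hx.2)).preimage_isClosed_of_isClosed isClosed_Icc
      isClosed_singleton
  have hS₂ : IsClosed S₂ :=
    (hf.mono (Icc_subset_Icc_left hx.1)).preimage_isClosed_of_isClosed isClosed_Icc
      isClosed_singleton
  have hS₁bdd : BddAbove S₁ := ⟨x, fun y hy => hy.1.2⟩
  have hS₂bdd : BddBelow S₂ := ⟨x, fun y hy => hy.1.1⟩
  have hA : sSup S₁ ∈ S₁ := hS₁.csSup_mem ⟨c, ⟨le_rfl, hx.1⟩, hc⟩ hS₁bdd
  have hB : sInf S₂ ∈ S₂ := hS₂.csInf_mem ⟨d, ⟨hx.2, le_rfl⟩, hd⟩ hS₂bdd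
  have hAx : sSup S₁ < x := hA.1.2.lt_of_ne fun h => hfx (h ▸ hA.2)
  have hxB : x < sInf S₂ := hB.1.1.lt_of_ne' fun h => hfx (h ▸ hB.2)
  refine ⟨sSup S₁, sInf S₂, hA.1.1, hAx.trans hxB, hB.1.2, hA.2, hB.2, fun t ht hft => ?_⟩
  rcases le_or_gt t x with htx | hxt
  · exact ht.1.not_ge (le_csSup hS₁bdd ⟨⟨hA.1.1.trans ht.1.le, htx⟩, hft⟩)
  · exact ht.2.not_ge (csInf_le hS₂bdd ⟨⟨hxt.le, ht.2.le.trans hB.1.2⟩, hft⟩)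

/- Compare `w` with `v x = sin (π (x - a) / (b - a))`, a positive solution of `v'' = -(π/(b-a))² v`
on `(a, b)` vanishing at both ends: the Wronskian `w' v - w v'` then vanishes at `a` and `b`,
but its derivative `(q + (π/(b-a))²) w v` is positive on `(a, b)`, contradicting Rolle. -/
lemma sturm_not_pos_between_zeros {w w' q : ℝ → ℝ} {a b : ℝ} (hab : a < b)
    (hw : ∀ x ∈ Icc a b, HasDerivAt w (w' x) x) (hw'c : ContinuousOn w' (Icc a b))
    (hw' : ∀ x ∈ Ioo a b, HasDerivAt w' (q x * w x) x)
    (hq : ∀ x ∈ Ioo a b, -(π / (b - a)) ^ 2 < q x)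
    (ha : w a = 0) (hb : w b = 0) (hpos : ∀ x ∈ Ioo a b, 0 < w x) : False := by
  set k := π / (b - a)
  have hkπ : k * (b - a) = π := div_mul_cancel₀ π (sub_pos.2 hab).ne'
  set v : ℝ → ℝ := fun x => sin (k * (x - a))
  set v' : ℝ → ℝ := fun x => k * cos (k * (x - a))
  have hlin (x : ℝ) : HasDerivAt (fun x => k * (x - a)) k x := by
    simpa using ((hasDerivAt_id x).sub_const a).const_mul k
  have hv (x : ℝ) : HasDerivAt v (v' x) x := by
    simpa [v, v', mul_comm] using (hlin x).sin
  have hv' (x : ℝ) : HasDerivAt v' (-k ^ 2 * v x) x :=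
    ((hlin x).cos.const_mul k).congr_deriv (by simp only [v]; ring)
  have hvpos : ∀ x ∈ Ioo a b, 0 < v x := fun x hx => sin_pos_of_pos_of_lt_pi
    (mul_pos (by positivity) (sub_pos.2 hx.1))
    (hkπ ▸ mul_lt_mul_of_pos_left (by linarith [hx.2]) (by positivity))
  set W : ℝ → ℝ := fun x => w' x * v x - w x * v' x
  have hWd : ∀ x ∈ Ioo a b, HasDerivAt W ((q x + k ^ 2) * w x * v x) x := fun x hx =>
    (((hw' x hx).mul (hv x)).sub ((hw x (Ioo_subset_Icc_self hx)).mul (hv' x))).congr_deriv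
      (by ring)
  have hWc : ContinuousOn W (Icc a b) := by
    have hwc : ContinuousOn w (Icc a b) := fun x hx => (hw x hx).continuousAt.continuousWithinAt
    have hvc : Continuous v := continuous_iff_continuousAt.2 fun x => (hv x).continuousAt
    have hv'c : Continuous v' := continuous_iff_continuousAt.2 fun x => (hv' x).continuousAt
    exact (hw'c.mul hvc.continuousOn).sub (hwc.mul hv'c.continuousOn)
  have hWab : W a = W b := by simp [W, v, ha, hb, hkπ]
  obtain ⟨c, hc, hWc0⟩ := exists_hasDerivAt_eq_zero hab hWc hWab hWd
  have : 0 < (q c + k ^ 2) * w c * v c :=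
    mul_pos (mul_pos (by linarith [hq c hc]) (hpos c hc)) (hvpos c hc)
  exact this.ne' hWc0

lemma sturm_exists_zero_between_zeros {w w' q : ℝ → ℝ} {a b : ℝ} (hab : a < b)
    (hw : ∀ x ∈ Icc a b, HasDerivAt w (w' x) x) (hw'c : ContinuousOn w' (Icc a b))
    (hw' : ∀ x ∈ Ioo a b, HasDerivAt w' (q x * w x) x)
    (hq : ∀ x ∈ Ioo a b, -(π / (b - a)) ^ 2 < q x)
    (ha : w a = 0) (hb : w b = 0) : ∃ x ∈ Ioo a b, w x = 0 := by
  by_contra! hne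
  have hwc : ContinuousOn w (Ioo a b) := fun x hx =>
    (hw x (Ioo_subset_Icc_self hx)).continuousAt.continuousWithinAt
  rcases isPreconnected_Ioo.forall_pos_or_forall_neg hwc hne with hpos | hneg
  · exact sturm_not_pos_between_zeros hab hw hw'c hw' hq ha hb hpos
  · refine sturm_not_pos_between_zeros (w := -w) (w' := -w') hab
      (fun x hx => (hw x hx).neg) hw'c.neg (fun x hx => ?_) hq (by simp [ha]) (by simp [hb])
      (fun x hx => neg_pos.2 (hneg x hx))
    exact (hw' x hx).neg.congr_deriv (by simp)

/- The leftmost zero `a₀` of `f'` in `[a, b]` has `f' = 0` on `[a₀, b]` (else a nodal interval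
appears), so `f a₀ = f b = f a`, and Rolle's theorem on `[a, a₀]` forces `a₀ = a`. -/
lemma eqOn_Icc_of_deriv_has_no_nodal_interval {f f' : ℝ → ℝ} {a b : ℝ} (hab : a ≤ b)
    (hf : ∀ x ∈ Icc a b, HasDerivAt f (f' x) x) (hf'c : ContinuousOn f' (Icc a b))
    (hfab : f a = f b) (hb : f' b = 0)
    (hnodal : ∀ A B, a ≤ A → A < B → B ≤ b → f' A = 0 → f' B = 0 → ∃ t ∈ Ioo A B, f' t = 0) :
    ∀ x ∈ Icc a b, f x = f a := by
  set Z := Icc a b ∩ f' ⁻¹' {0}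
  have hZbdd : BddBelow Z := ⟨a, fun y hy => hy.1.1⟩
  have ha₀ : sInf Z ∈ Z := (hf'c.preimage_isClosed_of_isClosed isClosed_Icc
    isClosed_singleton).csInf_mem ⟨b, ⟨hab, le_rfl⟩, hb⟩ hZbdd
  set a₀ := sInf Z
  have hzero : ∀ x ∈ Icc a₀ b, f' x = 0 := by
    intro x hx
    by_contra hx0
    obtain ⟨A, B, hA, hAB, hB, hfA, hfB, hne⟩ :=
      exists_nodal_interval (hf'c.mono (Icc_subset_Icc_left ha₀.1.1)) ha₀.2 hb hx hx0
    obtain ⟨t, ht, hft⟩ := hnodal A B (ha₀.1.1.trans hA) hAB hB hfA hfB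
    exact hne t ht hft
  have hconst : ∀ x ∈ Icc a₀ b, f x = f a₀ := by
    refine constant_of_has_deriv_right_zero (fun x hx => ?_) fun x hx => ?_
    · exact (hf x (Icc_subset_Icc_left ha₀.1.1 hx)).continuousAt.continuousWithinAt
    · simpa [hzero x (Ico_subset_Icc_self hx)] using
        (hf x (Icc_subset_Icc_left ha₀.1.1 (Ico_subset_Icc_self hx))).hasDerivWithinAt
  have ha₀a : a₀ = a := by
    by_contra hne
    have haa₀ : a < a₀ := ha₀.1.1.lt_of_ne' hne
    have hfa₀ : f a = f a₀ := hfab.trans (hconst b ⟨ha₀.1.2, le_rfl⟩)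
    obtain ⟨c, hc, hc0⟩ := exists_hasDerivAt_eq_zero haa₀
      (fun x hx => (hf x ⟨hx.1, hx.2.trans ha₀.1.2⟩).continuousAt.continuousWithinAt) hfa₀
      (fun x hx => hf x ⟨hx.1.le, hx.2.le.trans ha₀.1.2⟩)
    exact hc.2.not_ge (csInf_le hZbdd ⟨⟨hc.1.le, hc.2.le.trans ha₀.1.2⟩, hc0⟩)
  rwa [ha₀a] at hconst

/-- If F ∈ C¹ with F' > -π²/4 everywhere and ψ₀ is a C² nonconstant solution
of ψ₀'' = F(ψ₀) on [-1,1] with ψ₀(±1) = 0, then ψ₀'(1) ≠ 0. -/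
theorem stmt2
    (F : ℝ → ℝ) (hF : ContDiff ℝ 1 F)
    (hF' : ∀ t : ℝ, deriv F t > -(Real.pi ^ 2 / 4))
    (ψ ψ' ψ'' : ℝ → ℝ)
    (hψ : ∀ y ∈ Set.Icc (-1 : ℝ) 1, HasDerivAt ψ (ψ' y) y)
    (hψ' : ∀ y ∈ Set.Icc (-1 : ℝ) 1, HasDerivAt ψ' (ψ'' y) y)
    (hcont : ContinuousOn ψ'' (Set.Icc (-1 : ℝ) 1))
    (hode : ∀ y ∈ Set.Icc (-1 : ℝ) 1, ψ'' y = F (ψ y))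
    (hbc₁ : ψ (-1) = 0) (hbc₂ : ψ 1 = 0)
    (hnonconst : ∃ y₁ ∈ Set.Icc (-1 : ℝ) 1, ∃ y₂ ∈ Set.Icc (-1 : ℝ) 1, ψ y₁ ≠ ψ y₂) :
    ψ' 1 ≠ 0 := by
  intro h1
  have hψ'' : ∀ x ∈ Ioo (-1 : ℝ) 1, HasDerivAt ψ'' (deriv F (ψ x) * ψ' x) x := fun x hx =>
    ((hF.differentiable one_ne_zero (ψ x)).hasDerivAt.comp x (hψ x (Ioo_subset_Icc_self hx))
      ).congr_of_eventuallyEq <| eventually_of_mem (Ioo_mem_nhds hx.1 hx.2) fun y hy =>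
        hode y (Ioo_subset_Icc_self hy)
  have hnodal : ∀ A B, -1 ≤ A → A < B → B ≤ 1 → ψ' A = 0 → ψ' B = 0 →
      ∃ t ∈ Ioo A B, ψ' t = 0 := by
    intro A B hA hAB hB hA0 hB0
    have hsub : Icc A B ⊆ Icc (-1) 1 := Icc_subset_Icc hA hB
    refine sturm_exists_zero_between_zeros hAB (fun x hx => hψ' x (hsub hx))
      (hcont.mono hsub) (fun x hx => hψ'' x ⟨hA.trans_lt hx.1, hx.2.trans_le hB⟩)
      (fun x _ => ?_) hA0 hB0
    have : π ^ 2 / 4 ≤ (π / (B - A)) ^ 2 := by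
      rw [div_pow, div_le_div_iff_of_pos_left (by positivity) (by norm_num) (by nlinarith)]
      nlinarith
    linarith [hF' (ψ x)]
  have hconst := eqOn_Icc_of_deriv_has_no_nodal_interval (by norm_num) hψ
    (fun x hx => (hψ' x hx).continuousAt.continuousWithinAt) (hbc₁.trans hbc₂.symm) h1 hnodal
  obtain ⟨y₁, hy₁, y₂, hy₂, hne⟩ := hnonconst
  exact hne ((hconst y₁ hy₁).trans (hconst y₂ hy₂).symm)
end

section
/- Let F : ℝ → ℝ be C¹ with F'(t) > -λ₁ for all t, where λ₁ > 0 is such that ∫_{y₀}^{y₁} (u')² ≥ λ₁ ∫_{y₀}^{y₁} u² for all u ∈ H¹₀(y₀,y₁) whenever [y₀,y₁] ⊆ [-1,1]. Suppose ψ₀ : [-1,1] → ℝ is C² with ψ₀'' = F(ψ₀), ψ₀(-1) = c_g, ψ₀(1) = c_h, c_g ≠ c_h, and ψ₀'(y₀) = 0 for some y₀ ∈ (-1,1). Then y₀ is the unique critical point of ψ₀ in [-1,1]. -/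
/-!
Let `a < b` be two critical points. Since `ψ'` vanishes at both, the Poincaré inequality gives
`λ₁ ∫ₐᵇ ψ'² ≤ ∫ₐᵇ ψ''²`, while integrating `(F(ψ) ψ')' = F'(ψ) ψ'² + ψ''²` gives
`∫ₐᵇ ψ''² = -∫ₐᵇ F'(ψ) ψ'²`. Hence `∫ₐᵇ (λ₁ + F'(ψ)) ψ'² ≤ 0` with a positive weight, so
`ψ' ≡ 0` on `[a, b]` and `F(ψ) = ψ'' = 0` there. Now `(ψ, ψ')` and a constant both solve the
first-order system `(p, q)' = (q, F p)`, whose vector field is locally Lipschitz, so `ψ` is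
constant on `[-1, 1]`, contradicting `c_g ≠ c_h`.
-/

open Set Filter

def PoincareIneq (lam a b : ℝ) : Prop :=
  ∀ u u' : ℝ → ℝ, Continuous u' → (∀ y, HasDerivAt u (u' y) y) → u a = 0 → u b = 0 →
    lam * ∫ y in a..b, (u y) ^ 2 ≤ ∫ y in a..b, (u' y) ^ 2

theorem exists_hasDerivAt_eqOn_Icc {g g' : ℝ → ℝ} {a b : ℝ} (hab : a ≤ b)
    (hg : ∀ y ∈ Icc a b, HasDerivAt g (g' y) y) (hg' : ContinuousOn g' (Icc a b)) :
    ∃ u u' : ℝ → ℝ, Continuous u' ∧ (∀ y, HasDerivAt u (u' y) y) ∧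
      EqOn u g (Icc a b) ∧ EqOn u' g' (Icc a b) := by
  set u' := IccExtend hab ((Icc a b).domRestrict g')
  have hu' : Continuous u' := (continuousOn_iff_continuous_domRestrict.mp hg').Icc_extend'
  have hu'g' : EqOn u' g' (Icc a b) := fun y hy => IccExtend_of_mem hab _ hy
  refine ⟨fun z => g a + ∫ t in a..z, u' t, u', hu',
    fun y => (hu'.integral_hasStrictDerivAt a y).hasDerivAt.const_add (g a), fun y hy => ?_,
    hu'g'⟩
  have hsub : uIcc a y ⊆ Icc a b := uIcc_subset_Icc (left_mem_Icc.mpr hab) hy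
  show g a + _ = _
  rw [intervalIntegral.integral_congr (hu'g'.mono hsub),
    intervalIntegral.integral_eq_sub_of_hasDerivAt (fun z hz => hg z (hsub hz))
      (hg'.mono hsub).intervalIntegrable]
  ring

theorem PoincareIneq.integral_sq_le_of_Icc {lam a b : ℝ} (hP : PoincareIneq lam a b)
    (hab : a ≤ b) {g g' : ℝ → ℝ} (hg : ∀ y ∈ Icc a b, HasDerivAt g (g' y) y)
    (hg' : ContinuousOn g' (Icc a b)) (ha : g a = 0) (hb : g b = 0) :
    lam * ∫ y in a..b, g y ^ 2 ≤ ∫ y in a..b, g' y ^ 2 := by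
  obtain ⟨u, u', hu'c, hu, hug, hu'g'⟩ := exists_hasDerivAt_eqOn_Icc hab hg hg'
  have hsq {v w : ℝ → ℝ} (h : EqOn v w (Icc a b)) :
      ∫ y in a..b, v y ^ 2 = ∫ y in a..b, w y ^ 2 :=
    intervalIntegral.integral_congr fun y hy => by
      rw [uIcc_of_le hab] at hy
      simp only [h hy]
  rw [← hsq hug, ← hsq hu'g']
  exact hP u u' hu'c hu (by rw [hug (left_mem_Icc.mpr hab), ha])
    (by rw [hug (right_mem_Icc.mpr hab), hb])

theorem ODE_solution_unique_of_locallyLipschitz_of_mem_Icc {E : Type*} [NormedAddCommGroup E]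
    [NormedSpace ℝ E] {V : E → E} (hV : LocallyLipschitz V) {f g : ℝ → E} {a b t₀ : ℝ}
    (ht : t₀ ∈ Ioo a b) (hf : ContinuousOn f (Icc a b))
    (hf' : ∀ t ∈ Ioo a b, HasDerivAt f (V (f t)) t) (hg : ContinuousOn g (Icc a b))
    (hg' : ∀ t ∈ Ioo a b, HasDerivAt g (V (g t)) t) (heq : f t₀ = g t₀) :
    EqOn f g (Icc a b) := by
  obtain ⟨K, hK⟩ := hV.locallyLipschitzOn.exists_lipschitzOnWith_of_compact
    ((isCompact_Icc.image_of_continuousOn hf).union (isCompact_Icc.image_of_continuousOn hg))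
  exact ODE_solution_unique_of_mem_Icc (v := fun _ => V) (fun _ _ => hK) ht hf hf'
    (fun t ht => .inl (mem_image_of_mem f (Ioo_subset_Icc_self ht))) hg hg'
    (fun t ht => .inr (mem_image_of_mem g (Ioo_subset_Icc_self ht))) heq

section SecondOrderODE

variable {F ψ ψ' ψ'' : ℝ → ℝ}

theorem integral_deriv_mul_sq_add_sq_eq {a b : ℝ} (hab : a ≤ b) (hF : ContDiff ℝ 1 F)
    (hψ : ∀ y ∈ Icc a b, HasDerivAt ψ (ψ' y) y) (hψ' : ∀ y ∈ Icc a b, HasDerivAt ψ' (ψ'' y) y)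
    (hψ'' : ContinuousOn ψ'' (Icc a b)) (hode : ∀ y ∈ Icc a b, ψ'' y = F (ψ y)) :
    ∫ y in a..b, deriv F (ψ y) * ψ' y ^ 2 + ψ'' y ^ 2 = F (ψ b) * ψ' b - F (ψ a) * ψ' a := by
  have hψc : ContinuousOn ψ (Icc a b) := fun y hy => (hψ y hy).continuousAt.continuousWithinAt
  have hψ'c : ContinuousOn ψ' (Icc a b) :=
    fun y hy => (hψ' y hy).continuousAt.continuousWithinAt
  have hderiv : ∀ y ∈ uIcc a b, HasDerivAt (fun z => F (ψ z) * ψ' z)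
      (deriv F (ψ y) * ψ' y ^ 2 + ψ'' y ^ 2) y := by
    intro y hy
    rw [uIcc_of_le hab] at hy
    refine ((((hF.differentiable one_ne_zero) (ψ y)).hasDerivAt.comp y (hψ y hy)).mul
      (hψ' y hy)).congr_deriv ?_
    rw [Function.comp_apply, ← hode y hy]
    ring
  refine intervalIntegral.integral_eq_sub_of_hasDerivAt hderiv
    (ContinuousOn.intervalIntegrable ?_)
  rw [uIcc_of_le hab]
  exact (((hF.continuous_deriv le_rfl).comp_continuousOn hψc).mul (hψ'c.pow 2)).add (hψ''.pow 2)

theorem eqOn_zero_of_poincareIneq {lam a b : ℝ} (hab : a < b) (hF : ContDiff ℝ 1 F)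
    (hF' : ∀ t, deriv F t > -lam) (hP : PoincareIneq lam a b)
    (hψ : ∀ y ∈ Icc a b, HasDerivAt ψ (ψ' y) y) (hψ' : ∀ y ∈ Icc a b, HasDerivAt ψ' (ψ'' y) y)
    (hψ'' : ContinuousOn ψ'' (Icc a b)) (hode : ∀ y ∈ Icc a b, ψ'' y = F (ψ y))
    (ha : ψ' a = 0) (hb : ψ' b = 0) : EqOn ψ' 0 (Icc a b) := by
  have hψc : ContinuousOn ψ (Icc a b) := fun y hy => (hψ y hy).continuousAt.continuousWithinAt
  have hψ'c : ContinuousOn ψ' (Icc a b) :=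
    fun y hy => (hψ' y hy).continuousAt.continuousWithinAt
  have hDFc : ContinuousOn (fun y => deriv F (ψ y)) (Icc a b) :=
    (hF.continuous_deriv le_rfl).comp_continuousOn hψc
  have hpoincare := hP.integral_sq_le_of_Icc hab.le hψ' hψ'' ha hb
  have henergy := integral_deriv_mul_sq_add_sq_eq hab.le hF hψ hψ' hψ'' hode
  rw [ha, hb, mul_zero, mul_zero, sub_zero] at henergy
  have hweighted : ∫ y in a..b, (lam + deriv F (ψ y)) * ψ' y ^ 2 ≤ 0 := by
    have hint {f : ℝ → ℝ} (hf : ContinuousOn f (Icc a b)) :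
        IntervalIntegrable f MeasureTheory.volume a b :=
      hf.intervalIntegrable_of_Icc hab.le
    have hsplit : ∫ y in a..b, (lam + deriv F (ψ y)) * ψ' y ^ 2 =
        (lam * ∫ y in a..b, ψ' y ^ 2) - (∫ y in a..b, ψ'' y ^ 2) +
          ∫ y in a..b, deriv F (ψ y) * ψ' y ^ 2 + ψ'' y ^ 2 := by
      rw [← intervalIntegral.integral_const_mul, ← intervalIntegral.integral_sub
          (hint (f := fun y => lam * ψ' y ^ 2) (by fun_prop))
          (hint (f := fun y => ψ'' y ^ 2) (by fun_prop)),
        ← intervalIntegral.integral_add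
          (hint (f := fun y => lam * ψ' y ^ 2 - ψ'' y ^ 2) (by fun_prop))
          (hint (f := fun y => deriv F (ψ y) * ψ' y ^ 2 + ψ'' y ^ 2) (by fun_prop))]
      congr 1 with y
      ring
    linarith
  intro y hy
  by_contra hne
  refine hweighted.not_gt (intervalIntegral.integral_pos hab
    ((continuousOn_const.add hDFc).mul (hψ'c.pow 2)) (fun z _ => ?_) ⟨y, hy, ?_⟩)
  · exact mul_nonneg (by linarith [hF' (ψ z)]) (sq_nonneg _)
  · exact mul_pos (by linarith [hF' (ψ y)]) (pow_pos (abs_pos.mpr hne) 2 |>.trans_eq (sq_abs _))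

theorem exists_eqOn_const_of_deriv_eqOn_zero {a b c d : ℝ} (hF : LocallyLipschitz F)
    (hψ : ∀ y ∈ Icc c d, HasDerivAt ψ (ψ' y) y) (hψ' : ∀ y ∈ Icc c d, HasDerivAt ψ' (ψ'' y) y)
    (hode : ∀ y ∈ Icc c d, ψ'' y = F (ψ y)) (hab : a < b) (hca : c ≤ a) (hbd : b ≤ d)
    (hzero : EqOn ψ' 0 (Icc a b)) :
    ∃ C, EqOn ψ (fun _ => C) (Icc c d) := by
  obtain ⟨m, hm⟩ : (Ioo a b).Nonempty := nonempty_Ioo.mpr hab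
  have hmcd : m ∈ Icc c d := ⟨hca.trans hm.1.le, hm.2.le.trans hbd⟩
  have hψ''m : ψ'' m = 0 :=
    (hψ' m hmcd).unique <| (hasDerivAt_const m 0).congr_of_eventuallyEq <|
      eventually_of_mem (Ioo_mem_nhds hm.1 hm.2) fun z hz => hzero (Ioo_subset_Icc_self hz)
  have hV : LocallyLipschitz fun p : ℝ × ℝ => (p.2, F p.1) :=
    LipschitzWith.prod_snd.locallyLipschitz.prodMk
      (hF.comp LipschitzWith.prod_fst.locallyLipschitz)
  have hcont {φ φ' : ℝ → ℝ} (h : ∀ y ∈ Icc c d, HasDerivAt φ (φ' y) y) :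
      ContinuousOn φ (Icc c d) :=
    fun y hy => (h y hy).continuousAt.continuousWithinAt
  have hsol := ODE_solution_unique_of_locallyLipschitz_of_mem_Icc hV
    (f := fun y => (ψ y, ψ' y)) (g := fun _ => (ψ m, 0)) ⟨hca.trans_lt hm.1, hm.2.trans_le hbd⟩
    ((hcont hψ).prodMk (hcont hψ'))
    (fun t ht => by
      simpa only [hode t (Ioo_subset_Icc_self ht)] using
        (hψ t (Ioo_subset_Icc_self ht)).prodMk (hψ' t (Ioo_subset_Icc_self ht)))
    continuousOn_const
    (fun t _ => by
      show HasDerivAt _ (0, F (ψ m)) t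
      rw [← hode m hmcd, hψ''m, Prod.mk_zero_zero]
      exact hasDerivAt_const t _)
    (by simp only [hzero (Ioo_subset_Icc_self hm), Pi.zero_apply])
  exact ⟨ψ m, fun y hy => congrArg Prod.fst (hsol hy)⟩

end SecondOrderODE

theorem stmt3_general
    (F : ℝ → ℝ) (hF : ContDiff ℝ 1 F)
    (lam : ℝ)
    (hpoincare : ∀ a b : ℝ, -1 ≤ a → a < b → b ≤ 1 →
      ∀ u u' : ℝ → ℝ, Continuous u' → (∀ y, HasDerivAt u (u' y) y) →
        u a = 0 → u b = 0 →
        lam * ∫ y in a..b, (u y) ^ 2 ≤ ∫ y in a..b, (u' y) ^ 2)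
    (hF' : ∀ t : ℝ, deriv F t > -lam)
    (ψ ψ' ψ'' : ℝ → ℝ)
    (hψ : ∀ y ∈ Set.Icc (-1 : ℝ) 1, HasDerivAt ψ (ψ' y) y)
    (hψ' : ∀ y ∈ Set.Icc (-1 : ℝ) 1, HasDerivAt ψ' (ψ'' y) y)
    (hcont : ContinuousOn ψ'' (Set.Icc (-1 : ℝ) 1))
    (hode : ∀ y ∈ Set.Icc (-1 : ℝ) 1, ψ'' y = F (ψ y))
    (cg ch : ℝ) (hbc₁ : ψ (-1) = cg) (hbc₂ : ψ 1 = ch) (hhom : cg ≠ ch)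
    (y₀ : ℝ) (hy₀ : y₀ ∈ Set.Ioo (-1 : ℝ) 1) (hcrit : ψ' y₀ = 0) :
    ∀ y ∈ Set.Icc (-1 : ℝ) 1, ψ' y = 0 → y = y₀ := by
  intro y₁ hy₁ hcrit₁
  by_contra hne
  obtain ⟨a, b, hab, ha, hb, hψ'a, hψ'b⟩ :
      ∃ a b : ℝ, a < b ∧ -1 ≤ a ∧ b ≤ 1 ∧ ψ' a = 0 ∧ ψ' b = 0 := by
    rcases lt_or_gt_of_ne hne with h | h
    · exact ⟨y₁, y₀, h, hy₁.1, hy₀.2.le, hcrit₁, hcrit⟩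
    · exact ⟨y₀, y₁, h, hy₀.1.le, hy₁.2, hcrit, hcrit₁⟩
  have hsub : Icc a b ⊆ Icc (-1) 1 := Icc_subset_Icc ha hb
  have hzero : EqOn ψ' 0 (Icc a b) :=
    eqOn_zero_of_poincareIneq hab hF hF' (hpoincare a b ha hab hb)
      (fun y hy => hψ y (hsub hy)) (fun y hy => hψ' y (hsub hy)) (hcont.mono hsub)
      (fun y hy => hode y (hsub hy)) hψ'a hψ'b
  obtain ⟨C, hC⟩ :=
    exists_eqOn_const_of_deriv_eqOn_zero hF.locallyLipschitz hψ hψ' hode hab ha hb hzero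
  exact hhom (by rw [← hbc₁, ← hbc₂, hC (left_mem_Icc.mpr (by norm_num)),
    hC (right_mem_Icc.mpr (by norm_num))])

/-- Uniqueness of the stagnation level for a shear flow with non-trivial
homology.  F ∈ C¹ with F' > -λ₁, where λ₁ > 0 satisfies the Poincaré inequality
∫ (u')² ≥ λ₁ ∫ u² on every subinterval [a,b] ⊆ [-1,1] for u vanishing at the endpoints.
If ψ₀'' = F(ψ₀) on [-1,1], ψ₀(-1) = c_g, ψ₀(1) = c_h with c_g ≠ c_h, and ψ₀'(y₀) = 0 for
some y₀ ∈ (-1,1), then y₀ is the unique critical point of ψ₀ in [-1,1]. -/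
theorem stmt3
    (F : ℝ → ℝ) (hF : ContDiff ℝ 1 F)
    (lam : ℝ) (hlam : 0 < lam)
    (hpoincare : ∀ a b : ℝ, -1 ≤ a → a < b → b ≤ 1 →
      ∀ u u' : ℝ → ℝ, Continuous u' → (∀ y, HasDerivAt u (u' y) y) →
        u a = 0 → u b = 0 →
        lam * ∫ y in a..b, (u y) ^ 2 ≤ ∫ y in a..b, (u' y) ^ 2)
    (hF' : ∀ t : ℝ, deriv F t > -lam)
    (ψ ψ' ψ'' : ℝ → ℝ)
    (hψ : ∀ y ∈ Set.Icc (-1 : ℝ) 1, HasDerivAt ψ (ψ' y) y)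
    (hψ' : ∀ y ∈ Set.Icc (-1 : ℝ) 1, HasDerivAt ψ' (ψ'' y) y)
    (hcont : ContinuousOn ψ'' (Set.Icc (-1 : ℝ) 1))
    (hode : ∀ y ∈ Set.Icc (-1 : ℝ) 1, ψ'' y = F (ψ y))
    (cg ch : ℝ) (hbc₁ : ψ (-1) = cg) (hbc₂ : ψ 1 = ch) (hhom : cg ≠ ch)
    (y₀ : ℝ) (hy₀ : y₀ ∈ Set.Ioo (-1 : ℝ) 1) (hcrit : ψ' y₀ = 0) :
    ∀ y ∈ Set.Icc (-1 : ℝ) 1, ψ' y = 0 → y = y₀ :=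
  stmt3_general F hF lam hpoincare hF' ψ ψ' ψ'' hψ hψ' hcont hode cg ch hbc₁ hbc₂ hhom y₀ hy₀ hcrit
end

section
/- Let ψ : D → ℝ be C² with ∇ψ vanishing along a C¹ curve x ↦ (x, y₀(x)) in D, and suppose Δψ(x, y₀(x)) = F(ψ(x, y₀(x))) = F(c₀) ≠ 0 at some point. Then ∂ᵧ²ψ(x, y₀(x)) ≠ 0 at that point, and in fact F(c₀) = (1 + (y₀'(x))²)·∂ᵧ²ψ(x, y₀(x)). -/
/-!
Differentiating the identities `ψx (t, y₀ t) = 0` and `ψy (t, y₀ t) = 0` along the curve gives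
`ψxx + ψxy y₀' = 0` and `ψxy + ψyy y₀' = 0`, hence `ψxx = (y₀')² ψyy`. Substituting into
`ψxx + ψyy = F c₀` yields `F c₀ = (1 + (y₀')²) ψyy`, so `ψyy = 0` would force `F c₀ = 0`.
-/

open Filter Topology ContinuousLinearMap

theorem HasFDerivAt.hasDerivAt_comp_graph {g : ℝ × ℝ → ℝ} {gx gy : ℝ} {y : ℝ → ℝ} {y' x : ℝ}
    (hg : HasFDerivAt g (gx • fst ℝ ℝ ℝ + gy • snd ℝ ℝ ℝ) (x, y x)) (hy : HasDerivAt y y' x) :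
    HasDerivAt (fun t => g (t, y t)) (gx + gy * y') x := by
  simpa [Function.comp_def] using hg.comp_hasDerivAt x ((hasDerivAt_id x).prodMk hy)

theorem HasFDerivAt.add_mul_eq_zero_of_eventually_eq_zero_on_graph {g : ℝ × ℝ → ℝ}
    {gx gy : ℝ} {y : ℝ → ℝ} {y' x : ℝ}
    (hg : HasFDerivAt g (gx • fst ℝ ℝ ℝ + gy • snd ℝ ℝ ℝ) (x, y x)) (hy : HasDerivAt y y' x)
    (hzero : ∀ᶠ t in 𝓝 x, g (t, y t) = 0) :
    gx + gy * y' = 0 :=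
  (hg.hasDerivAt_comp_graph hy).unique ((hasDerivAt_const x 0).congr_of_eventuallyEq hzero)

open ContinuousLinearMap in
theorem stmt5_general
    (D : Set (ℝ × ℝ))
    (ψx ψy ψxx ψxy ψyy : ℝ × ℝ → ℝ)
    (hψx : ∀ p ∈ D, HasFDerivAt ψx (ψxx p • fst ℝ ℝ ℝ + ψxy p • snd ℝ ℝ ℝ) p)
    (hψy : ∀ p ∈ D, HasFDerivAt ψy (ψxy p • fst ℝ ℝ ℝ + ψyy p • snd ℝ ℝ ℝ) p)
    (a b : ℝ)
    (y₀ y₀' : ℝ → ℝ)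
    (hy₀ : ∀ x ∈ Set.Ioo a b, HasDerivAt y₀ (y₀' x) x)
    (hmem : ∀ x ∈ Set.Ioo a b, (x, y₀ x) ∈ D)
    (hcritx : ∀ x ∈ Set.Ioo a b, ψx (x, y₀ x) = 0)
    (hcrity : ∀ x ∈ Set.Ioo a b, ψy (x, y₀ x) = 0)
    (F : ℝ → ℝ) (c₀ : ℝ)
    (x : ℝ) (hx : x ∈ Set.Ioo a b)
    (hlap : ψxx (x, y₀ x) + ψyy (x, y₀ x) = F c₀)
    (hFc₀ : F c₀ ≠ 0) :
    ψyy (x, y₀ x) ≠ 0 ∧ F c₀ = (1 + (y₀' x) ^ 2) * ψyy (x, y₀ x) := by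
  have hnear : ∀ᶠ t in 𝓝 x, t ∈ Set.Ioo a b := isOpen_Ioo.mem_nhds hx
  have hxx : ψxx (x, y₀ x) + ψxy (x, y₀ x) * y₀' x = 0 :=
    (hψx _ (hmem x hx)).add_mul_eq_zero_of_eventually_eq_zero_on_graph (hy₀ x hx)
      (hnear.mono hcritx)
  have hyy : ψxy (x, y₀ x) + ψyy (x, y₀ x) * y₀' x = 0 :=
    (hψy _ (hmem x hx)).add_mul_eq_zero_of_eventually_eq_zero_on_graph (hy₀ x hx)
      (hnear.mono hcrity)
  have key : F c₀ = (1 + (y₀' x) ^ 2) * ψyy (x, y₀ x) := by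
    linear_combination -hlap + hxx - y₀' x * hyy
  exact ⟨fun h => hFc₀ (by rw [key, h, mul_zero]), key⟩

open ContinuousLinearMap in
/-- If ∇ψ vanishes along a C¹ curve x ↦ (x, y₀(x)) in D and at some point of
the curve Δψ = F(ψ) = F(c₀) ≠ 0, then at that point ∂ᵧ²ψ ≠ 0 and in fact
F(c₀) = (1 + (y₀')²)·∂ᵧ²ψ. -/
theorem stmt5
    (D : Set (ℝ × ℝ)) (hD : IsOpen D)
    (ψ ψx ψy ψxx ψxy ψyy : ℝ × ℝ → ℝ)
    (hgrad : ∀ p ∈ D, HasFDerivAt ψ (ψx p • fst ℝ ℝ ℝ + ψy p • snd ℝ ℝ ℝ) p)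
    (hψx : ∀ p ∈ D, HasFDerivAt ψx (ψxx p • fst ℝ ℝ ℝ + ψxy p • snd ℝ ℝ ℝ) p)
    (hψy : ∀ p ∈ D, HasFDerivAt ψy (ψxy p • fst ℝ ℝ ℝ + ψyy p • snd ℝ ℝ ℝ) p)
    (a b : ℝ) (hab : a < b)
    (y₀ y₀' : ℝ → ℝ)
    (hy₀ : ∀ x ∈ Set.Ioo a b, HasDerivAt y₀ (y₀' x) x)
    (hmem : ∀ x ∈ Set.Ioo a b, (x, y₀ x) ∈ D)
    (hcritx : ∀ x ∈ Set.Ioo a b, ψx (x, y₀ x) = 0)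
    (hcrity : ∀ x ∈ Set.Ioo a b, ψy (x, y₀ x) = 0)
    (F : ℝ → ℝ) (c₀ : ℝ)
    (x : ℝ) (hx : x ∈ Set.Ioo a b)
    (hval : ψ (x, y₀ x) = c₀)
    (hlap : ψxx (x, y₀ x) + ψyy (x, y₀ x) = F c₀)
    (hFc₀ : F c₀ ≠ 0) :
    ψyy (x, y₀ x) ≠ 0 ∧ F c₀ = (1 + (y₀' x) ^ 2) * ψyy (x, y₀ x) :=
  stmt5_general D ψx ψy ψxx ψxy ψyy hψx hψy a b y₀ y₀' hy₀ hmem hcritx hcrity F c₀ x hx hlap hFc₀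
end

section
/- Let F : ℝ → ℝ be C¹ with F' > -π²/4 (the first Dirichlet eigenvalue of -d²/dy² on (-1,1)), let k ≥ 1 be an integer, let ψ₀ : [-1,1] → ℝ be continuous, and let φ : [-1,1] → ℝ be the C² solution of φ''(y) = (k² + F'(ψ₀(y)))·φ(y) with φ(-1) = 0, φ(1) = 1. Then φ(y) ≠ 0 for every y ∈ (-1,1). -/
/-!
Write `q = k² + F'(ψ₀) > -π²/4`. If `φ(y₀) = 0` with `-1 < y₀ < 1`, then `φ` vanishes on
`[-1, y₀]`: otherwise it has one sign between two consecutive zeros `c < d` in `[-1, y₀]`, and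
the Wronskian of `φ` with `w(y) = cos (π y / 2)`, which solves `w'' = -(π²/4) w` and is positive
on `(-1, 1)`, would be strictly increasing on `[c, d]` while `W(c) ≥ 0 ≥ W(d)` (Sturm comparison).
Hence `φ(y₀) = φ'(y₀) = 0`, and uniqueness for the linear system `(φ, φ')' = (φ', q φ)` forces
`φ = 0` on `[y₀, 1]`, contradicting `φ(1) = 1`.
-/

open Set Real

theorem exists_zeros_around_of_pos {f : ℝ → ℝ} {a b x : ℝ} (hf : ContinuousOn f (Icc a b))
    (ha : f a = 0) (hb : f b = 0) (hx : x ∈ Icc a b) (hfx : 0 < f x) :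
    ∃ c d, a ≤ c ∧ c < d ∧ d ≤ b ∧ f c = 0 ∧ f d = 0 ∧ ∀ y ∈ Ioo c d, 0 < f y := by
  set Z := Icc a b ∩ f ⁻¹' {0}
  have hZ : IsClosed Z := hf.preimage_isClosed_of_isClosed isClosed_Icc isClosed_singleton
  have hZc : BddAbove (Z ∩ Iic x) := ⟨x, fun _ h => h.2⟩
  have hZd : BddBelow (Z ∩ Ici x) := ⟨x, fun _ h => h.2⟩
  have hc : sSup (Z ∩ Iic x) ∈ Z ∩ Iic x :=
    (hZ.inter isClosed_Iic).csSup_mem ⟨a, ⟨⟨le_rfl, hx.1.trans hx.2⟩, ha⟩, hx.1⟩ hZc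
  have hd : sInf (Z ∩ Ici x) ∈ Z ∩ Ici x :=
    (hZ.inter isClosed_Ici).csInf_mem ⟨b, ⟨⟨hx.1.trans hx.2, le_rfl⟩, hb⟩, hx.2⟩ hZd
  set c := sSup (Z ∩ Iic x)
  set d := sInf (Z ∩ Ici x)
  have hxZ : x ∉ Z := fun h => hfx.ne' h.2
  have hcx : c < x := hc.2.lt_of_ne fun h => hxZ (h ▸ hc.1)
  have hxd : x < d := hd.2.lt_of_ne' fun h => hxZ (h ▸ hd.1)
  have hsub : Ioo c d ⊆ Icc a b := Ioo_subset_Icc_self.trans (Icc_subset_Icc hc.1.1.1 hd.1.1.2)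
  have hne : ∀ y ∈ Ioo c d, f y ≠ 0 := by
    intro y hy hy0
    rcases le_total y x with hyx | hxy
    · exact hy.1.not_ge (le_csSup hZc ⟨⟨hsub hy, hy0⟩, hyx⟩)
    · exact hy.2.not_ge (csInf_le hZd ⟨⟨hsub hy, hy0⟩, hxy⟩)
  refine ⟨c, d, hc.1.1.1, hcx.trans hxd, hd.1.1.2, hc.1.2, hd.1.2, fun y hy => ?_⟩
  by_contra! hy0
  obtain ⟨z, hz, hz0⟩ :=
    isPreconnected_Ioo.intermediate_value hy ⟨hcx, hxd⟩ (hf.mono hsub) ⟨hy0, hfx.le⟩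
  exact hne z hz hz0

theorem HasDerivAt.nonneg_of_zero_of_pos_right {f : ℝ → ℝ} {f' c d : ℝ} (hf : HasDerivAt f f' c)
    (hcd : c < d) (hc : f c = 0) (hpos : ∀ y ∈ Ioo c d, 0 < f y) : 0 ≤ f' := by
  have hslope := hf.hasDerivWithinAt (s := Ioi c)
  rw [hasDerivWithinAt_iff_tendsto_slope' self_notMem_Ioi] at hslope
  refine ge_of_tendsto hslope ?_
  filter_upwards [Ioo_mem_nhdsGT hcd] with y hy
  rw [slope_def_field, hc, sub_zero]
  exact div_nonneg (hpos y hy).le (sub_pos.2 hy.1).le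

theorem HasDerivAt.nonpos_of_zero_of_pos_left {f : ℝ → ℝ} {f' c d : ℝ} (hf : HasDerivAt f f' d)
    (hcd : c < d) (hd : f d = 0) (hpos : ∀ y ∈ Ioo c d, 0 < f y) : f' ≤ 0 := by
  have hslope := hf.hasDerivWithinAt (s := Iio d)
  rw [hasDerivWithinAt_iff_tendsto_slope' self_notMem_Iio] at hslope
  refine le_of_tendsto hslope ?_
  filter_upwards [Ioo_mem_nhdsLT hcd] with y hy
  rw [slope_def_field, hd, sub_zero]
  exact div_nonpos_of_nonneg_of_nonpos (hpos y hy).le (sub_neg.2 hy.2).le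

theorem sturm_comparison {q r φ φ' w w' : ℝ → ℝ} {c d : ℝ} (hcd : c < d)
    (hφ : ∀ y ∈ Icc c d, HasDerivAt φ (φ' y) y) (hφ' : ∀ y ∈ Icc c d, HasDerivAt φ' (q y * φ y) y)
    (hw : ∀ y ∈ Icc c d, HasDerivAt w (w' y) y) (hw' : ∀ y ∈ Icc c d, HasDerivAt w' (r y * w y) y)
    (hrq : ∀ y ∈ Ioo c d, r y < q y) (hw_nonneg : ∀ y ∈ Icc c d, 0 ≤ w y)
    (hw_pos : ∀ y ∈ Ioo c d, 0 < w y) (hφc : φ c = 0) (hφd : φ d = 0) :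
    ∃ y ∈ Ioo c d, φ y ≤ 0 := by
  by_contra! hφ_pos
  set W := fun y => φ' y * w y - φ y * w' y
  have hW : ∀ y ∈ Icc c d, HasDerivAt W ((q y - r y) * (φ y * w y)) y := fun y hy =>
    (((hφ' y hy).mul (hw y hy)).sub ((hφ y hy).mul (hw' y hy))).congr_deriv (by ring)
  have hW_mono : StrictMonoOn W (Icc c d) := by
    refine strictMonoOn_of_hasDerivWithinAt_pos (convex_Icc c d)
      (fun y hy => (hW y hy).continuousAt.continuousWithinAt)
      (fun y hy => (hW y (interior_subset hy)).hasDerivWithinAt) fun y hy => ?_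
    rw [interior_Icc] at hy
    exact mul_pos (sub_pos.2 (hrq y hy)) (mul_pos (hφ_pos y hy) (hw_pos y hy))
  have hcI : c ∈ Icc c d := left_mem_Icc.2 hcd.le
  have hdI : d ∈ Icc c d := right_mem_Icc.2 hcd.le
  have hWc : 0 ≤ W c := by
    simp only [W, hφc, zero_mul, sub_zero]
    exact mul_nonneg ((hφ c hcI).nonneg_of_zero_of_pos_right hcd hφc hφ_pos) (hw_nonneg c hcI)
  have hWd : W d ≤ 0 := by
    simp only [W, hφd, zero_mul, sub_zero]
    exact mul_nonpos_of_nonpos_of_nonneg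
      ((hφ d hdI).nonpos_of_zero_of_pos_left hcd hφd hφ_pos) (hw_nonneg d hdI)
  linarith [hW_mono hcI hdI hcd]

theorem hasDerivAt_cos_pi_div_two_mul (y : ℝ) :
    HasDerivAt (fun t => cos (π / 2 * t)) (-(π / 2) * sin (π / 2 * y)) y := by
  simpa [mul_comm] using ((hasDerivAt_id' y).const_mul (π / 2)).cos

theorem hasDerivAt_neg_sin_pi_div_two_mul (y : ℝ) :
    HasDerivAt (fun t => -(π / 2) * sin (π / 2 * t)) (-(π ^ 2 / 4) * cos (π / 2 * y)) y :=
  ((((hasDerivAt_id' y).const_mul (π / 2)).sin).const_mul (-(π / 2))).congr_deriv (by ring)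

theorem nonpos_of_dirichlet_zero {q φ φ' : ℝ → ℝ} {a b : ℝ} (ha : -1 ≤ a) (hb : b ≤ 1)
    (hq : ∀ y ∈ Ioo a b, -(π ^ 2 / 4) < q y)
    (hφ : ∀ y ∈ Icc a b, HasDerivAt φ (φ' y) y) (hφ' : ∀ y ∈ Icc a b, HasDerivAt φ' (q y * φ y) y)
    (hφa : φ a = 0) (hφb : φ b = 0) {x : ℝ} (hx : x ∈ Icc a b) : φ x ≤ 0 := by
  by_contra! hφx
  obtain ⟨c, d, hac, hcd, hdb, hφc, hφd, hφ_pos⟩ := exists_zeros_around_of_pos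
    (fun y hy => (hφ y hy).continuousAt.continuousWithinAt) hφa hφb hx hφx
  have hsub : Icc c d ⊆ Icc (-1) 1 := Icc_subset_Icc (ha.trans hac) (hdb.trans hb)
  have hw_nonneg : ∀ y ∈ Icc c d, 0 ≤ cos (π / 2 * y) := fun y hy => by
    have := hsub hy
    apply cos_nonneg_of_mem_Icc
    constructor <;> nlinarith [pi_pos, this.1, this.2]
  have hw_pos : ∀ y ∈ Ioo c d, 0 < cos (π / 2 * y) := fun y hy => by
    have : y ∈ Ioo (-1) 1 := ⟨(ha.trans hac).trans_lt hy.1, hy.2.trans_le (hdb.trans hb)⟩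
    apply cos_pos_of_mem_Ioo
    constructor <;> nlinarith [pi_pos, this.1, this.2]
  obtain ⟨y, hy, hφy⟩ := sturm_comparison (r := fun _ => -(π ^ 2 / 4)) hcd
    (fun y hy => hφ y (Icc_subset_Icc hac hdb hy)) (fun y hy => hφ' y (Icc_subset_Icc hac hdb hy))
    (fun y _ => hasDerivAt_cos_pi_div_two_mul y) (fun y _ => hasDerivAt_neg_sin_pi_div_two_mul y)
    (fun y hy => hq y ⟨hac.trans_lt hy.1, hy.2.trans_le hdb⟩) hw_nonneg hw_pos hφc hφd
  exact (hφ_pos y hy).not_ge hφy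

theorem eqOn_zero_of_dirichlet_zero {q φ φ' : ℝ → ℝ} {a b : ℝ} (ha : -1 ≤ a) (hb : b ≤ 1)
    (hq : ∀ y ∈ Ioo a b, -(π ^ 2 / 4) < q y)
    (hφ : ∀ y ∈ Icc a b, HasDerivAt φ (φ' y) y) (hφ' : ∀ y ∈ Icc a b, HasDerivAt φ' (q y * φ y) y)
    (hφa : φ a = 0) (hφb : φ b = 0) : EqOn φ 0 (Icc a b) := fun x hx =>
  le_antisymm (nonpos_of_dirichlet_zero ha hb hq hφ hφ' hφa hφb hx) <| neg_nonpos.1 <|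
    nonpos_of_dirichlet_zero (φ := -φ) (φ' := -φ') ha hb hq (fun y hy => (hφ y hy).neg)
      (fun y hy => ((hφ' y hy).neg).congr_deriv (by simp)) (by simp [hφa]) (by simp [hφb]) hx

theorem eqOn_zero_of_cauchy_zero {q φ φ' : ℝ → ℝ} {a b : ℝ} (hq : ContinuousOn q (Icc a b))
    (hφ : ∀ y ∈ Icc a b, HasDerivAt φ (φ' y) y) (hφ' : ∀ y ∈ Icc a b, HasDerivAt φ' (q y * φ y) y)
    (hφa : φ a = 0) (hφ'a : φ' a = 0) : EqOn φ 0 (Icc a b) := by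
  obtain ⟨M, hM⟩ := isCompact_Icc.exists_bound_of_continuousOn hq
  have hLip : ∀ t ∈ Ico a b,
      LipschitzOnWith (max 1 M.toNNReal) (fun x : ℝ × ℝ => (x.2, q t * x.1)) univ := by
    intro t ht
    refine (LipschitzWith.prod_snd.prodMk ((lipschitzWith_smul (q t)).comp
      LipschitzWith.prod_fst)).weaken (max_le_max le_rfl ?_) |>.lipschitzOnWith
    rw [mul_one, ← NNReal.coe_le_coe, coe_nnnorm, Real.coe_toNNReal']
    exact (hM t (Ico_subset_Icc_self ht)).trans (le_max_left _ _)
  have hsol : ∀ t ∈ Icc a b, HasDerivAt (fun t => (φ t, φ' t)) (φ' t, q t * φ t) t :=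
    fun t ht => (hφ t ht).prodMk (hφ' t ht)
  have hzero := ODE_solution_unique_of_mem_Icc_right (g := 0) hLip
    (fun t ht => (hsol t ht).continuousAt.continuousWithinAt)
    (fun t ht => (hsol t (Ico_subset_Icc_self ht)).hasDerivWithinAt) (fun _ _ => mem_univ _)
    continuousOn_const
    (fun t _ => (hasDerivWithinAt_const t _ 0).congr_deriv (by ext <;> simp))
    (fun _ _ => mem_univ _) (by simp [hφa, hφ'a])
  exact fun t ht => congrArg Prod.fst (hzero ht)

theorem HasDerivAt.eq_zero_of_eqOn_Icc_zero {f : ℝ → ℝ} {f' a b : ℝ} (hf : HasDerivAt f f' b)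
    (hab : a < b) (hzero : EqOn f 0 (Icc a b)) : f' = 0 :=
  (uniqueDiffOn_Icc hab b (right_mem_Icc.2 hab.le)).eq_deriv _ hf.hasDerivWithinAt
    ((hasDerivWithinAt_const b _ 0).congr hzero (hzero (right_mem_Icc.2 hab.le)))

theorem stmt11_general
    (F : ℝ → ℝ) (hF : ContDiff ℝ 1 F)
    (hF' : ∀ t : ℝ, deriv F t > -(Real.pi ^ 2 / 4))
    (k : ℕ) (hk : 1 ≤ k)
    (ψ₀ : ℝ → ℝ) (hψ₀ : Continuous ψ₀)
    (φ φ' φ'' : ℝ → ℝ)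
    (hφ : ∀ y ∈ Set.Icc (-1 : ℝ) 1, HasDerivAt φ (φ' y) y)
    (hφ' : ∀ y ∈ Set.Icc (-1 : ℝ) 1, HasDerivAt φ' (φ'' y) y)
    (hode : ∀ y ∈ Set.Icc (-1 : ℝ) 1,
      φ'' y = ((k : ℝ) ^ 2 + deriv F (ψ₀ y)) * φ y)
    (hbc₁ : φ (-1) = 0) (hbc₂ : φ 1 = 1) :
    ∀ y ∈ Set.Ioo (-1 : ℝ) 1, φ y ≠ 0 := by
  intro y₀ hy₀ hφy₀
  set q : ℝ → ℝ := fun t => (k : ℝ) ^ 2 + deriv F (ψ₀ t)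
  have hq : ∀ t, -(π ^ 2 / 4) < q t := fun t => by
    have : (1 : ℝ) ≤ k := by exact_mod_cast hk
    nlinarith [hF' (ψ₀ t)]
  have hφ'' : ∀ y ∈ Icc (-1 : ℝ) 1, HasDerivAt φ' (q y * φ y) y := fun y hy =>
    hode y hy ▸ hφ' y hy
  have hleft : EqOn φ 0 (Icc (-1) y₀) :=
    eqOn_zero_of_dirichlet_zero le_rfl hy₀.2.le (fun t _ => hq t)
      (fun y hy => hφ y ⟨hy.1, hy.2.trans hy₀.2.le⟩)
      (fun y hy => hφ'' y ⟨hy.1, hy.2.trans hy₀.2.le⟩) hbc₁ hφy₀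
  have hφ'y₀ : φ' y₀ = 0 := (hφ y₀ ⟨hy₀.1.le, hy₀.2.le⟩).eq_zero_of_eqOn_Icc_zero hy₀.1 hleft
  have hright : EqOn φ 0 (Icc y₀ 1) :=
    eqOn_zero_of_cauchy_zero
      (continuous_const.add ((hF.continuous_deriv le_rfl).comp hψ₀)).continuousOn
      (fun y hy => hφ y ⟨hy₀.1.le.trans hy.1, hy.2⟩)
      (fun y hy => hφ'' y ⟨hy₀.1.le.trans hy.1, hy.2⟩) hφy₀ hφ'y₀
  simpa [hbc₂] using hright (right_mem_Icc.2 hy₀.2.le)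

/-- if F ∈ C¹ with F' > -π²/4, k ≥ 1 an integer, ψ₀ continuous, and φ is the
C² solution of φ'' = (k² + F'(ψ₀))·φ on [-1,1] with φ(-1) = 0, φ(1) = 1, then φ never
vanishes in the open interval (-1,1). -/
theorem stmt11
    (F : ℝ → ℝ) (hF : ContDiff ℝ 1 F)
    (hF' : ∀ t : ℝ, deriv F t > -(Real.pi ^ 2 / 4))
    (k : ℕ) (hk : 1 ≤ k)
    (ψ₀ : ℝ → ℝ) (hψ₀ : Continuous ψ₀)
    (φ φ' φ'' : ℝ → ℝ)
    (hφ : ∀ y ∈ Set.Icc (-1 : ℝ) 1, HasDerivAt φ (φ' y) y)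
    (hφ' : ∀ y ∈ Set.Icc (-1 : ℝ) 1, HasDerivAt φ' (φ'' y) y)
    (hcont : ContinuousOn φ'' (Set.Icc (-1 : ℝ) 1))
    (hode : ∀ y ∈ Set.Icc (-1 : ℝ) 1,
      φ'' y = ((k : ℝ) ^ 2 + deriv F (ψ₀ y)) * φ y)
    (hbc₁ : φ (-1) = 0) (hbc₂ : φ 1 = 1) :
    ∀ y ∈ Set.Ioo (-1 : ℝ) 1, φ y ≠ 0 :=
  stmt11_general F hF hF' k hk ψ₀ hψ₀ φ φ' φ'' hφ hφ' hode hbc₁ hbc₂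
end
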